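/- Let n ≥ 1, B ≥ 2 be integers and let x_0,…,x_n be points of a convex set U ⊆ ℝ^n. Suppose f : U → ℝ is approximately convex with respect to Δ_{B-1}. Then the function h : Δ_n → ℝ defined by h(t) = f(Σ_{j=0}^n t(j) x_j) − Σ_{j=0}^n t(j) f(x_j) is approximately convex with respect to Δ_{B-1} and satisfies h(e(j)) = 0 for each vertex e(j) of Δ_n; consequently h(t) ≤ κ(n,B) for all t ∈ Δ_n, where κ(n,B) = ⌊log_B n⌋ + ⌈B(n + 1 − B^{⌊log_B n⌋})/(B − 1)⌉ / (n + 1). -/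

import Mathlib

open Finset

/-- `f` is approximately convex with respect to `Δ_{B-1}` on the convex set `U`,
with tolerance `ε`. -/
def ApproxConvexWrt {V : Type*} [AddCommMonoid V] [Module ℝ V]
    (B : ℕ) (U : Set V) (f : V → ℝ) (ε : ℝ) : Prop :=
  ∀ (x : Fin B → V) (t : Fin B → ℝ),
    (∀ i, x i ∈ U) → (∀ i, 0 ≤ t i) → (∑ i, t i) = 1 →
    f (∑ i, t i • x i) ≤ (∑ i, t i * f (x i)) + ε

/-- `κ(n,B) = ⌊log_B n⌋ + ⌈B(n+1-B^⌊log_B n⌋)/(B-1)⌉/(n+1)`. -/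
noncomputable def kappa (n B : ℕ) : ℝ :=
  (⌊Real.logb B n⌋ : ℝ) +
    (⌈(B : ℝ) * ((n : ℝ) + 1 - (B : ℝ) ^ (⌊Real.logb B n⌋ : ℤ)) / ((B : ℝ) - 1)⌉ : ℝ) /
      ((n : ℝ) + 1)

lemma exists_ordered_subset {ι : Type*} [Fintype ι] [DecidableEq ι] (t : ι → ℝ) :
    ∀ m, m ≤ Fintype.card ι → ∃ S : Finset ι, S.card = m ∧ ∀ i ∈ S, ∀ j ∉ S, t i ≤ t j := by
  intro m
  induction m with
  | zero => exact fun _ => ⟨∅, rfl, by simp⟩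
  | succ m ih =>
    intro hm
    obtain ⟨S, hcard, hord⟩ := ih (by omega)
    have hne : (Sᶜ : Finset ι).Nonempty := by
      rw [← Finset.card_pos, Finset.card_compl, hcard]; omega
    obtain ⟨j₀, hj₀, hmin⟩ := Finset.exists_min_image Sᶜ t hne
    have hj₀S : j₀ ∉ S := by simpa using hj₀
    refine ⟨insert j₀ S, by rw [Finset.card_insert_of_notMem hj₀S, hcard], ?_⟩
    intro i hi j hj
    have hjS : j ∉ S := fun h => hj (Finset.mem_insert_of_mem h)
    rcases Finset.mem_insert.mp hi with rfl | hiS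
    · exact hmin j (by simpa using hjS)
    · exact hord i hiS j hjS

lemma exists_small_subset {N : ℕ} (t : Fin N → ℝ) (ht0 : ∀ i, 0 ≤ t i)
    (ht1 : ∑ i, t i = 1) (m : ℕ) (hm : m ≤ N) :
    ∃ S : Finset (Fin N), S.card = m ∧ ∑ i ∈ S, t i ≤ (m : ℝ) / (N : ℝ) := by
  have hN : 0 < N := by
    by_contra hc
    interval_cases N
    · simp at ht1
  obtain ⟨S, hcard, hord⟩ := exists_ordered_subset t m (by simpa using hm)
  refine ⟨S, hcard, ?_⟩
  have hcompl : ∑ i ∈ Sᶜ, t i = 1 - ∑ i ∈ S, t i := by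
    have := Finset.sum_add_sum_compl S t
    linarith
  have key : ((N : ℝ) - m) * ∑ i ∈ S, t i ≤ m * ∑ i ∈ Sᶜ, t i := by
    have h1 : ∑ i ∈ S, ∑ j ∈ Sᶜ, t i ≤ ∑ i ∈ S, ∑ j ∈ Sᶜ, t j := by
      refine Finset.sum_le_sum fun i hi => Finset.sum_le_sum fun j hj => ?_
      exact hord i hi j (by simpa using hj)
    have hccard : (Sᶜ : Finset (Fin N)).card = N - m := by
      rw [Finset.card_compl, hcard]; simp
    simp only [Finset.sum_const, nsmul_eq_mul, hccard, hcard] at h1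
    have hNm : ((N - m : ℕ) : ℝ) = (N : ℝ) - m := by
      push_cast [Nat.cast_sub hm]; ring
    calc ((N : ℝ) - m) * ∑ i ∈ S, t i = ∑ i ∈ S, ((N-m : ℕ) : ℝ) * t i := by
          rw [← Finset.mul_sum, hNm]
      _ ≤ ∑ j ∈ Sᶜ, (m : ℝ) * t j := by
          simpa [Finset.mul_sum] using h1
      _ = m * ∑ i ∈ Sᶜ, t i := by rw [Finset.mul_sum]
  rw [hcompl] at key
  rw [le_div_iff₀ (by positivity)]
  nlinarith [ht1]

lemma depth_bound {V : Type*} [AddCommGroup V] [Module ℝ V] {B : ℕ} (hB : 1 ≤ B)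
    {S : Set V} (hS : Convex ℝ S) {g : V → ℝ} (hg : ApproxConvexWrt B S g 1) :
    ∀ (d : ℕ) (y : Fin (B ^ d) → V) (w : Fin (B ^ d) → ℝ),
      (∀ i, y i ∈ S) → (∀ i, 0 ≤ w i) → (∑ i, w i) = 1 →
      g (∑ i, w i • y i) ≤ (∑ i, w i * g (y i)) + d := by
  intro d
  induction d with
  | zero =>
    intro y w hy hw hw1
    have huniv : (univ : Finset (Fin (B ^ 0))) = {⟨0, by simp⟩} := by
      ext j
      have hj : (j : ℕ) < 1 := by simpa using j.isLt
      simp only [Finset.mem_univ, Finset.mem_singleton, true_iff, Fin.ext_iff]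
      omega
    rw [huniv] at hw1 ⊢
    simp only [Finset.sum_singleton] at hw1 ⊢
    rw [hw1, one_smul, one_mul]
    simp
  | succ d ih =>
    intro y w hy hw hw1
    have hBp : 0 < B ^ (d + 1) := Nat.pow_pos (by omega)
    set e : Fin (B ^ (d+1)) ≃ Fin (B ^ d) × Fin B :=
      (finCongr (pow_succ B d)).trans finProdFinEquiv.symm with he
    set W : Fin B → ℝ := fun b => ∑ a : Fin (B ^ d), w (e.symm (a, b)) with hWdef
    set z : Fin B → V := fun b =>
      if _ : W b = 0 then y ⟨0, hBp⟩
      else ∑ a : Fin (B ^ d), ((W b)⁻¹ * w (e.symm (a, b))) • y (e.symm (a, b)) with hzdef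
    have hzite : ∀ b, z b = dite (W b = 0) (fun _ => y ⟨0, hBp⟩)
        (fun _ => ∑ a : Fin (B ^ d), ((W b)⁻¹ * w (e.symm (a, b))) • y (e.symm (a, b))) :=
      fun b => rfl
    have hWnn : ∀ b, 0 ≤ W b := fun b => Finset.sum_nonneg fun a _ => hw _
    have hsum_prod : ∀ (F : Fin (B ^ (d+1)) → ℝ),
        ∑ b : Fin B, ∑ a : Fin (B ^ d), F (e.symm (a, b)) = ∑ i, F i := by
      intro F
      rw [Finset.sum_comm, ← Equiv.sum_comp e.symm F]
      exact (Fintype.sum_prod_type (f := fun p => F (e.symm p))).symm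
    have hsumV : ∀ (F : Fin (B ^ (d+1)) → V),
        ∑ b : Fin B, ∑ a : Fin (B ^ d), F (e.symm (a, b)) = ∑ i, F i := by
      intro F
      rw [Finset.sum_comm, ← Equiv.sum_comp e.symm F]
      exact (Fintype.sum_prod_type (f := fun p => F (e.symm p))).symm
    have hW1 : ∑ b, W b = 1 := (hsum_prod w).trans hw1
    have hzero : ∀ b, W b = 0 → ∀ a, w (e.symm (a, b)) = 0 := by
      intro b hb a
      exact (Finset.sum_eq_zero_iff_of_nonneg (fun a _ => hw (e.symm (a, b)))).mp hb a (Finset.mem_univ a)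
    have hinv : ∀ b, W b ≠ 0 → ∑ a : Fin (B ^ d), (W b)⁻¹ * w (e.symm (a, b)) = 1 := by
      intro b hb
      rw [← Finset.mul_sum]
      exact inv_mul_cancel₀ hb
    have hzS : ∀ b, z b ∈ S := by
      intro b
      rw [hzite b]
      by_cases hWb : W b = 0
      · rw [dif_pos hWb]; exact hy _
      · rw [dif_neg hWb]
        exact hS.sum_mem (fun a _ => mul_nonneg (inv_nonneg.mpr (hWnn b)) (hw _)) (hinv b hWb) (fun a _ => hy _)
    have hWz : ∀ b, W b • z b = ∑ a : Fin (B ^ d), w (e.symm (a, b)) • y (e.symm (a, b)) := by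
      intro b
      by_cases hWb : W b = 0
      · rw [hWb, zero_smul]
        exact (Finset.sum_eq_zero fun a _ => by rw [hzero b hWb a, zero_smul]).symm
      · rw [hzite b, dif_neg hWb, Finset.smul_sum]
        refine Finset.sum_congr rfl fun a _ => ?_
        rw [smul_smul, mul_inv_cancel_left₀ hWb]
    have hpt : ∑ b, W b • z b = ∑ i, w i • y i := by
      rw [← hsumV (fun i => w i • y i)]
      exact Finset.sum_congr rfl fun b _ => hWz b
    have main := hg z W hzS hWnn hW1
    rw [hpt] at main
    have step : ∀ b, W b * g (z b) ≤ (∑ a : Fin (B ^ d), w (e.symm (a, b)) * g (y (e.symm (a, b)))) + W b * d := by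
      intro b
      by_cases hWb : W b = 0
      · rw [hWb, zero_mul, zero_mul]
        rw [Finset.sum_eq_zero fun a _ => by rw [hzero b hWb a, zero_mul]]
        simp
      · have hih := ih (fun a => y (e.symm (a, b))) (fun a => (W b)⁻¹ * w (e.symm (a, b)))
          (fun a => hy _) (fun a => mul_nonneg (inv_nonneg.mpr (hWnn b)) (hw _)) (hinv b hWb)
        have hz_eq : z b = ∑ a : Fin (B ^ d), ((W b)⁻¹ * w (e.symm (a, b))) • y (e.symm (a, b)) := by
          rw [hzite b, dif_neg hWb]
        rw [← hz_eq] at hih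
        calc W b * g (z b)
            ≤ W b * ((∑ a : Fin (B^d), ((W b)⁻¹ * w (e.symm (a, b))) * g (y (e.symm (a, b)))) + d) :=
              mul_le_mul_of_nonneg_left hih (hWnn b)
          _ = (∑ a : Fin (B ^ d), w (e.symm (a, b)) * g (y (e.symm (a, b)))) + W b * d := by
              rw [mul_add, Finset.mul_sum]
              congr 1
              refine Finset.sum_congr rfl fun a _ => ?_
              rw [← mul_assoc, mul_inv_cancel_left₀ hWb]
    calc g (∑ i, w i • y i) ≤ (∑ b, W b * g (z b)) + 1 := main
      _ ≤ (∑ b, ((∑ a : Fin (B ^ d), w (e.symm (a, b)) * g (y (e.symm (a, b)))) + W b * d)) + 1 :=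
          add_le_add_left (Finset.sum_le_sum fun b _ => step b) 1
      _ = (∑ i, w i * g (y i)) + (d : ℝ) + 1 := by
          rw [Finset.sum_add_distrib, hsum_prod (fun i => w i * g (y i)), ← Finset.sum_mul, hW1, one_mul]
      _ = (∑ i, w i * g (y i)) + ((d + 1 : ℕ) : ℝ) := by push_cast; ring

lemma sum_dite_fin {ι : Type*} {M : Type*} [AddCommMonoid M] (s : Finset ι) {N : ℕ}
    (hcard : s.card ≤ N) (G : ι → M) :
    ∑ p : Fin N, (if h : (p : ℕ) < s.card then G (s.equivFin.symm ⟨(p : ℕ), h⟩) else 0)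
      = ∑ i ∈ s, G i := by
  have h1 : ∑ p : Fin N, (if h : (p : ℕ) < s.card then G (s.equivFin.symm ⟨(p : ℕ), h⟩) else 0)
      = ∑ p ∈ (univ : Finset (Fin s.card)).map (Fin.castLEEmb hcard),
          (if h : (p : ℕ) < s.card then G (s.equivFin.symm ⟨(p : ℕ), h⟩) else 0) := by
    symm
    refine Finset.sum_subset (Finset.subset_univ _) ?_
    intro p _ hp
    rw [dif_neg]
    intro hlt
    exact hp (Finset.mem_map.mpr ⟨⟨(p : ℕ), hlt⟩, Finset.mem_univ _, by ext; simp⟩)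
  rw [h1, Finset.sum_map]
  have h2 : ∀ q : Fin s.card,
      (if h : ((Fin.castLEEmb hcard q : Fin N) : ℕ) < s.card
        then G (s.equivFin.symm ⟨((Fin.castLEEmb hcard q : Fin N) : ℕ), h⟩) else 0)
      = G (s.equivFin.symm q) := by
    intro q
    rw [dif_pos (by simpa using q.isLt)]
    congr 1
  rw [Finset.sum_congr rfl (fun q _ => h2 q)]
  rw [← Finset.sum_coe_sort s G]
  exact Equiv.sum_comp s.equivFin.symm (fun i => G i)

lemma depth_bound_finset {V ι : Type*} [AddCommGroup V] [Module ℝ V] {B : ℕ} (hB : 1 ≤ B)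
    {S : Set V} (hS : Convex ℝ S) {g : V → ℝ} (hg : ApproxConvexWrt B S g 1)
    (d : ℕ) (s : Finset ι) (hcard : s.card ≤ B ^ d)
    (y : ι → V) (w : ι → ℝ) (hy : ∀ i ∈ s, y i ∈ S) (hw : ∀ i ∈ s, 0 ≤ w i)
    (hw1 : ∑ i ∈ s, w i = 1) :
    g (∑ i ∈ s, w i • y i) ≤ (∑ i ∈ s, w i * g (y i)) + d := by
  have hsne : s.Nonempty := by
    rcases s.eq_empty_or_nonempty with rfl | hne
    · simp at hw1
    · exact hne
  obtain ⟨i₀, hi₀⟩ := hsne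
  set Y : Fin (B ^ d) → V := fun p =>
    if h : (p : ℕ) < s.card then y (s.equivFin.symm ⟨(p : ℕ), h⟩) else y i₀ with hYdef
  set Wt : Fin (B ^ d) → ℝ := fun p =>
    if h : (p : ℕ) < s.card then w (s.equivFin.symm ⟨(p : ℕ), h⟩) else 0 with hWtdef
  have hYite : ∀ p, Y p = if h : (p : ℕ) < s.card then y (s.equivFin.symm ⟨(p : ℕ), h⟩) else y i₀ := fun _ => rfl
  have hWtite : ∀ p, Wt p = if h : (p : ℕ) < s.card then w (s.equivFin.symm ⟨(p : ℕ), h⟩) else 0 := fun _ => rfl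
  have hmem : ∀ (h' : Fin s.card → s), True := fun _ => trivial
  have hY : ∀ p, Y p ∈ S := by
    intro p
    rw [hYite p]
    by_cases hp : (p : ℕ) < s.card
    · rw [dif_pos hp]; exact hy _ (Finset.coe_mem _)
    · rw [dif_neg hp]; exact hy _ hi₀
  have hWt : ∀ p, 0 ≤ Wt p := by
    intro p
    rw [hWtite p]
    by_cases hp : (p : ℕ) < s.card
    · rw [dif_pos hp]; exact hw _ (Finset.coe_mem _)
    · rw [dif_neg hp]
  have h1 : ∑ p, Wt p • Y p = ∑ i ∈ s, w i • y i := by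
    rw [← sum_dite_fin s hcard (fun i => w i • y i)]
    refine Finset.sum_congr rfl fun p _ => ?_
    rw [hWtite p, hYite p]
    by_cases hp : (p : ℕ) < s.card
    · rw [dif_pos hp, dif_pos hp, dif_pos hp]
    · simp [dif_neg hp]
  have h2 : ∑ p, Wt p = 1 := by
    rw [← hw1, ← sum_dite_fin s hcard w]
  have h3 : ∑ p, Wt p * g (Y p) = ∑ i ∈ s, w i * g (y i) := by
    rw [← sum_dite_fin s hcard (fun i => w i * g (y i))]
    refine Finset.sum_congr rfl fun p _ => ?_
    rw [hWtite p, hYite p]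
    by_cases hp : (p : ℕ) < s.card
    · rw [dif_pos hp, dif_pos hp, dif_pos hp]
    · simp [dif_neg hp]
  have := depth_bound hB hS hg d Y Wt hY hWt h2
  rw [h1, h3] at this
  exact this

lemma kappa_formula (n B : ℕ) (hn : 1 ≤ n) (hB : 2 ≤ B) :
    kappa n B = (Nat.log B n : ℝ) +
      ((((n + 1 - B ^ Nat.log B n) + ((n + 1 - B ^ Nat.log B n) + B - 2) / (B - 1)) : ℕ) : ℝ)
        / ((n : ℝ) + 1) := by
  set k := Nat.log B n with hk
  set P := B ^ k with hP
  set a := n + 1 - P with ha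
  set J := (a + B - 2) / (B - 1) with hJ
  have hPn : P ≤ n := Nat.pow_log_le_self B (by omega)
  have ha1 : 1 ≤ a := by omega
  have hdiv1 : J * (B - 1) ≤ a + B - 2 := Nat.div_mul_le_self _ _
  have hdiv2 : a + B - 2 < (J + 1) * (B - 1) :=
    (Nat.div_lt_iff_lt_mul (show 0 < B - 1 by omega)).mp (by omega)
  have hkfloor : ⌊Real.logb B n⌋ = (k : ℤ) := by
    rw [Real.floor_logb_natCast (Nat.cast_nonneg n), Int.log_natCast]
  have hpow : (B : ℝ) ^ ((k : ℤ)) = (P : ℝ) := by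
    rw [zpow_natCast, hP]
    push_cast
    ring
  have haR : ((a : ℕ) : ℝ) = (n : ℝ) + 1 - (P : ℝ) := by
    rw [ha]
    push_cast [Nat.cast_sub (by omega : P ≤ n + 1)]
    ring
  have hcR : ((J * (B - 1) : ℕ) : ℝ) = (J : ℝ) * ((B : ℝ) - 1) := by
    push_cast [Nat.cast_sub (by omega : 1 ≤ B)]
    ring
  have hd1R : (J : ℝ) * ((B : ℝ) - 1) ≤ (a : ℝ) + (B : ℝ) - 2 := by
    rw [← hcR]
    have : ((J * (B - 1) : ℕ) : ℝ) ≤ ((a + B - 2 : ℕ) : ℝ) := Nat.cast_le.mpr hdiv1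
    calc ((J * (B - 1) : ℕ) : ℝ) ≤ ((a + B - 2 : ℕ) : ℝ) := this
      _ = (a : ℝ) + (B : ℝ) - 2 := by push_cast [Nat.cast_sub (by omega : 2 ≤ a + B)]; ring
  have hd2R : (a : ℝ) + (B : ℝ) - 2 < ((J : ℝ) + 1) * ((B : ℝ) - 1) := by
    have h1 : ((a + B - 2 : ℕ) : ℝ) < (((J + 1) * (B - 1) : ℕ) : ℝ) := Nat.cast_lt.mpr hdiv2
    have h2 : ((a + B - 2 : ℕ) : ℝ) = (a : ℝ) + (B : ℝ) - 2 := by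
      push_cast [Nat.cast_sub (by omega : 2 ≤ a + B)]; ring
    have h3 : (((J + 1) * (B - 1) : ℕ) : ℝ) = ((J : ℝ) + 1) * ((B : ℝ) - 1) := by
      push_cast [Nat.cast_sub (by omega : 1 ≤ B)]; ring
    rw [h2, h3] at h1
    exact h1
  have hBR : (2 : ℝ) ≤ (B : ℝ) := by exact_mod_cast hB
  have hana : a ≤ J * (B - 1) := by
    have hc2 : (J + 1) * (B - 1) = J * (B - 1) + (B - 1) := by ring
    omega
  have hanaR : (a : ℝ) ≤ (J : ℝ) * ((B : ℝ) - 1) := by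
    rw [← hcR]
    exact_mod_cast hana
  have hceil : ⌈(B : ℝ) * ((n : ℝ) + 1 - (P : ℝ)) / ((B : ℝ) - 1)⌉ = ((a + J : ℕ) : ℤ) := by
    rw [Int.ceil_eq_iff]
    constructor
    · rw [lt_div_iff₀ (by linarith : (0:ℝ) < (B:ℝ) - 1)]
      push_cast
      rw [← haR]
      push_cast
      nlinarith
    · rw [div_le_iff₀ (by linarith : (0:ℝ) < (B:ℝ) - 1)]
      push_cast
      rw [← haR]
      push_cast
      nlinarith
  rw [kappa, hkfloor, hpow, hceil]
  push_cast
  ring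

lemma h_approx (n B : ℕ) (U : Set (Fin n → ℝ)) (hU : Convex ℝ U)
    (x : Fin (n + 1) → (Fin n → ℝ)) (hx : ∀ j, x j ∈ U)
    (f : (Fin n → ℝ) → ℝ) (hf : ApproxConvexWrt B U f 1)
    (h : (Fin (n + 1) → ℝ) → ℝ)
    (hh : ∀ t : Fin (n + 1) → ℝ, h t = f (∑ j, t j • x j) - ∑ j, t j * f (x j)) :
    ApproxConvexWrt B (stdSimplex ℝ (Fin (n + 1))) h 1 := by
  intro y t hy ht ht1
  set X : Fin B → (Fin n → ℝ) := fun i => ∑ j, y i j • x j with hX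
  have hXU : ∀ i, X i ∈ U := fun i =>
    hU.sum_mem (fun j _ => (hy i).1 j) (hy i).2 (fun j _ => hx j)
  have happ : ∀ j, (∑ i, t i • y i) j = ∑ i, t i * y i j := by
    intro j
    rw [Finset.sum_apply]
    simp [Pi.smul_apply, smul_eq_mul]
  have hswap : ∑ j, (∑ i, t i • y i) j • x j = ∑ i, t i • X i := by
    calc ∑ j, (∑ i, t i • y i) j • x j = ∑ j, ∑ i, (t i * y i j) • x j := by
          refine Finset.sum_congr rfl fun j _ => ?_
          rw [happ j, Finset.sum_smul]
      _ = ∑ i, ∑ j, (t i * y i j) • x j := Finset.sum_comm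
      _ = ∑ i, t i • X i := by
          refine Finset.sum_congr rfl fun i _ => ?_
          rw [hX, Finset.smul_sum]
          exact Finset.sum_congr rfl fun j _ => (smul_smul _ _ _).symm
  have hfs : f (∑ i, t i • X i) ≤ (∑ i, t i * f (X i)) + 1 := hf X t hXU ht ht1
  rw [hh (∑ i, t i • y i), hswap]
  have hsnd : ∑ j, (∑ i, t i • y i) j * f (x j) = ∑ i, t i * (∑ j, y i j * f (x j)) := by
    calc ∑ j, (∑ i, t i • y i) j * f (x j) = ∑ j, ∑ i, t i * y i j * f (x j) := by
          refine Finset.sum_congr rfl fun j _ => ?_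
          rw [happ j, Finset.sum_mul]
      _ = ∑ i, ∑ j, t i * y i j * f (x j) := Finset.sum_comm
      _ = ∑ i, t i * (∑ j, y i j * f (x j)) := by
          refine Finset.sum_congr rfl fun i _ => ?_
          rw [Finset.mul_sum]
          exact Finset.sum_congr rfl fun j _ => by ring
  have hsum_h : ∑ i, t i * h (y i) = (∑ i, t i * f (X i)) - ∑ i, t i * (∑ j, y i j * f (x j)) := by
    rw [← Finset.sum_sub_distrib]
    refine Finset.sum_congr rfl fun i _ => ?_
    rw [hh (y i)]
    ring
  rw [hsnd]
  linarith

lemma h_vertex (n B : ℕ)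
    (x : Fin (n + 1) → (Fin n → ℝ)) (f : (Fin n → ℝ) → ℝ)
    (h : (Fin (n + 1) → ℝ) → ℝ)
    (hh : ∀ t : Fin (n + 1) → ℝ, h t = f (∑ j, t j • x j) - ∑ j, t j * f (x j)) :
    ∀ j : Fin (n + 1), h (Pi.single j 1) = 0 := by
  intro j
  rw [hh]
  have h1 : ∑ j', (Pi.single j (1:ℝ) : Fin (n+1) → ℝ) j' • x j' = x j := by
    rw [Finset.sum_eq_single j]
    · rw [Pi.single_eq_same, one_smul]
    · intro b _ hb
      rw [Pi.single_eq_of_ne hb, zero_smul]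
    · intro hj; exact absurd (Finset.mem_univ j) hj
  have h2 : ∑ j', (Pi.single j (1:ℝ) : Fin (n+1) → ℝ) j' * f (x j') = f (x j) := by
    rw [Finset.sum_eq_single j]
    · rw [Pi.single_eq_same, one_mul]
    · intro b _ hb
      rw [Pi.single_eq_of_ne hb, zero_mul]
    · intro hj; exact absurd (Finset.mem_univ j) hj
  rw [h1, h2, sub_self]

lemma part3 (n B : ℕ) (hn : 1 ≤ n) (hB : 2 ≤ B)
    (h : (Fin (n + 1) → ℝ) → ℝ)
    (hg : ApproxConvexWrt B (stdSimplex ℝ (Fin (n + 1))) h 1)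
    (hvert : ∀ j : Fin (n + 1), h (Pi.single j 1) = 0) :
    ∀ t ∈ stdSimplex ℝ (Fin (n + 1)), h t ≤ kappa n B := by
  intro t htS
  obtain ⟨ht0, ht1⟩ := htS
  set k := Nat.log B n with hk
  set P := B ^ k with hP
  set a := n + 1 - P with ha
  set J := (a + B - 2) / (B - 1) with hJdef
  have hPn : P ≤ n := Nat.pow_log_le_self B (by omega)
  have hP1 : 1 ≤ P := Nat.one_le_pow _ _ (by omega)
  have hnP : n < B ^ (k + 1) := Nat.lt_pow_succ_log_self (by omega) n
  have hPB : B ^ (k + 1) = P * B := pow_succ B k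
  have hdiv1 : J * (B - 1) ≤ a + B - 2 := Nat.div_mul_le_self _ _
  have hdiv2 : a + B - 2 < (J + 1) * (B - 1) :=
    (Nat.div_lt_iff_lt_mul (show 0 < B - 1 by omega)).mp (by omega)
  have hc2 : (J + 1) * (B - 1) = J * (B - 1) + (B - 1) := by ring
  have hana : a ≤ J * (B - 1) := by omega
  have hJ1 : 1 ≤ J := by
    rcases Nat.eq_zero_or_pos J with hJ0 | hJp
    · rw [hJ0, zero_mul] at hana; omega
    · omega
  have hPBsub : P * (B - 1) + P = P * B := by
    have hb : (B - 1) + 1 = B := by omega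
    calc P * (B - 1) + P = P * ((B - 1) + 1) := by ring
      _ = P * B := by rw [hb]
  have haP : a ≤ P * (B - 1) := by omega
  have hJP : J ≤ P := by
    have h1 : (P + 1) * (B - 1) = P * (B - 1) + (B - 1) := by ring
    have h2 : J * (B - 1) < (P + 1) * (B - 1) := by omega
    have h3 : J < P + 1 := Nat.lt_of_mul_lt_mul_right h2
    omega
  set m := a + J with hm
  have hmn : m ≤ n + 1 := by omega
  set c₁ := P - J with hc₁
  have hJB : m ≤ J * B := by
    have hb : (B - 1) + 1 = B := by omega
    have : J * B = J * (B - 1) + J := by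
      calc J * B = J * ((B - 1) + 1) := by rw [hb]
        _ = J * (B - 1) + J := by ring
    omega
  obtain ⟨S, hScard, hSsum⟩ := exists_small_subset t ht0 ht1 m (by omega)
  have hSc : (Sᶜ : Finset (Fin (n + 1))).card = c₁ := by
    rw [Finset.card_compl, hScard, Fintype.card_fin]; omega
  -- the assignment function
  set φn : Fin (n + 1) → ℕ := fun i =>
    if hi : i ∈ S then c₁ + ((S.equivFin ⟨i, hi⟩ : Fin S.card) : ℕ) / B
    else (((Sᶜ).equivFin ⟨i, Finset.mem_compl.mpr hi⟩ : Fin (Sᶜ).card) : ℕ) with hφn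
  have hφn_ite : ∀ i, φn i =
      if hi : i ∈ S then c₁ + ((S.equivFin ⟨i, hi⟩ : Fin S.card) : ℕ) / B
      else (((Sᶜ).equivFin ⟨i, Finset.mem_compl.mpr hi⟩ : Fin (Sᶜ).card) : ℕ) := fun _ => rfl
  have hφnS : ∀ i (hi : i ∈ S), φn i = c₁ + ((S.equivFin ⟨i, hi⟩ : Fin S.card) : ℕ) / B := by
    intro i hi
    rw [hφn_ite i, dif_pos hi]
  have hφnC : ∀ i (hi : i ∉ S), φn i = (((Sᶜ).equivFin ⟨i, Finset.mem_compl.mpr hi⟩ : Fin (Sᶜ).card) : ℕ) := by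
    intro i hi
    rw [hφn_ite i, dif_neg hi]
  have hidxlt : ∀ i (hi : i ∈ S), ((S.equivFin ⟨i, hi⟩ : Fin S.card) : ℕ) / B < J := by
    intro i hi
    refine (Nat.div_lt_iff_lt_mul (by omega : 0 < B)).mpr ?_
    have h1 := (S.equivFin ⟨i, hi⟩).isLt
    omega
  have hφn_lt : ∀ i, φn i < P := by
    intro i
    by_cases hi : i ∈ S
    · rw [hφnS i hi]
      have := hidxlt i hi
      omega
    · rw [hφnC i hi]
      have := ((Sᶜ).equivFin ⟨i, Finset.mem_compl.mpr hi⟩).isLt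
      omega
  have hφnC_lt : ∀ i, i ∉ S → φn i < c₁ := by
    intro i hi
    rw [hφnC i hi]
    have := ((Sᶜ).equivFin ⟨i, Finset.mem_compl.mpr hi⟩).isLt
    omega
  have hφnS_ge : ∀ i, i ∈ S → c₁ ≤ φn i := by
    intro i hi
    rw [hφnS i hi]
    exact Nat.le_add_right _ _
  set φ : Fin (n + 1) → Fin P := fun i => ⟨φn i, hφn_lt i⟩ with hφ
  set fib : Fin P → Finset (Fin (n + 1)) := fun ℓ => univ.filter (fun i => φ i = ℓ) with hfib
  have hfib_mem : ∀ ℓ i, i ∈ fib ℓ ↔ φn i = (ℓ : ℕ) := by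
    intro ℓ i
    rw [hfib]
    simp only [Finset.mem_filter, Finset.mem_univ, true_and, hφ, Fin.ext_iff]
  -- fiber cardinalities
  have hfibC : ∀ ℓ : Fin P, (ℓ : ℕ) < c₁ → (fib ℓ).card ≤ 1 := by
    intro ℓ hℓ
    refine Finset.card_le_one.mpr fun i hi j hj => ?_
    rw [hfib_mem] at hi hj
    have hiS : i ∉ S := by intro hiS; have := hφnS_ge i hiS; omega
    have hjS : j ∉ S := by intro hjS; have := hφnS_ge j hjS; omega
    rw [hφnC i hiS] at hi
    rw [hφnC j hjS] at hj
    have heq : (Sᶜ).equivFin ⟨i, Finset.mem_compl.mpr hiS⟩ = (Sᶜ).equivFin ⟨j, Finset.mem_compl.mpr hjS⟩ := by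
      ext
      rw [hi, hj]
    have := (Sᶜ).equivFin.injective heq
    exact congrArg Subtype.val this
  have hfibB : ∀ ℓ : Fin P, c₁ ≤ (ℓ : ℕ) → (fib ℓ).card ≤ B := by
    intro ℓ hℓ
    set g := (ℓ : ℕ) - c₁ with hgdef
    have hmemS : ∀ i ∈ fib ℓ, i ∈ S := by
      intro i hi
      rw [hfib_mem] at hi
      by_contra hiS
      have := hφnC_lt i hiS
      omega
    have hinj : ∀ i ∈ fib ℓ, (fun i => if hi : i ∈ S then ((S.equivFin ⟨i, hi⟩ : Fin S.card) : ℕ) else 0) i ∈ Finset.Ico (g * B) (g * B + B) := by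
      intro i hi
      have hiS := hmemS i hi
      simp only [dif_pos hiS]
      rw [hfib_mem] at hi
      rw [hφnS i hiS] at hi
      have hq : ((S.equivFin ⟨i, hiS⟩ : Fin S.card) : ℕ) / B = g := by omega
      have h1 : g * B ≤ ((S.equivFin ⟨i, hiS⟩ : Fin S.card) : ℕ) := by
        rw [← hq]; exact Nat.div_mul_le_self _ _
      have h2 : ((S.equivFin ⟨i, hiS⟩ : Fin S.card) : ℕ) < (g + 1) * B :=
        (Nat.div_lt_iff_lt_mul (by omega : 0 < B)).mp (by omega)
      have h3 : (g + 1) * B = g * B + B := by ring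
      rw [Finset.mem_Ico]
      omega
    have hinj2 : Set.InjOn (fun i => if hi : i ∈ S then ((S.equivFin ⟨i, hi⟩ : Fin S.card) : ℕ) else 0) (fib ℓ) := by
      intro i hi j hj hij
      have hiS := hmemS i hi
      have hjS := hmemS j hj
      simp only [dif_pos hiS, dif_pos hjS] at hij
      have : S.equivFin ⟨i, hiS⟩ = S.equivFin ⟨j, hjS⟩ := by ext; exact hij
      have := S.equivFin.injective this
      exact congrArg Subtype.val this
    calc (fib ℓ).card ≤ (Finset.Ico (g * B) (g * B + B)).card :=
          Finset.card_le_card_of_injOn _ hinj hinj2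
      _ = B := by rw [Nat.card_Ico]; omega
  -- weights and points
  set vert : Fin (n + 1) → (Fin (n + 1) → ℝ) := fun i => Pi.single i 1 with hvertdef
  set W : Fin P → ℝ := fun ℓ => ∑ i ∈ fib ℓ, t i with hW
  set z : Fin P → (Fin (n + 1) → ℝ) := fun ℓ =>
    if _ : W ℓ = 0 then vert 0
    else ∑ i ∈ fib ℓ, ((W ℓ)⁻¹ * t i) • vert i with hz
  have hzite : ∀ ℓ, z ℓ = if _ : W ℓ = 0 then vert 0
      else ∑ i ∈ fib ℓ, ((W ℓ)⁻¹ * t i) • vert i := fun _ => rfl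
  have hWnn : ∀ ℓ, 0 ≤ W ℓ := fun ℓ => Finset.sum_nonneg fun i _ => ht0 i
  have hmaps : ∀ i ∈ (univ : Finset (Fin (n + 1))), φ i ∈ (univ : Finset (Fin P)) :=
    fun i _ => Finset.mem_univ _
  have hW1 : ∑ ℓ, W ℓ = 1 := by
    rw [hW]
    rw [Finset.sum_fiberwise_of_maps_to hmaps t]
    exact ht1
  have hzero : ∀ ℓ, W ℓ = 0 → ∀ i ∈ fib ℓ, t i = 0 := by
    intro ℓ hℓ i hi
    exact (Finset.sum_eq_zero_iff_of_nonneg (fun i _ => ht0 i)).mp hℓ i hi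
  have hinvsum : ∀ ℓ, W ℓ ≠ 0 → ∑ i ∈ fib ℓ, (W ℓ)⁻¹ * t i = 1 := by
    intro ℓ hℓ
    rw [← Finset.mul_sum]
    exact inv_mul_cancel₀ hℓ
  have hvmem : ∀ i, vert i ∈ stdSimplex ℝ (Fin (n + 1)) := fun i => single_mem_stdSimplex ℝ i
  have hzmem : ∀ ℓ, z ℓ ∈ stdSimplex ℝ (Fin (n + 1)) := by
    intro ℓ
    rw [hzite ℓ]
    by_cases hℓ : W ℓ = 0
    · rw [dif_pos hℓ]; exact hvmem 0
    · rw [dif_neg hℓ]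
      exact (convex_stdSimplex ℝ _).sum_mem
        (fun i _ => mul_nonneg (inv_nonneg.mpr (hWnn ℓ)) (ht0 i)) (hinvsum ℓ hℓ)
        (fun i _ => hvmem i)
  have hWz : ∀ ℓ, W ℓ • z ℓ = ∑ i ∈ fib ℓ, t i • vert i := by
    intro ℓ
    by_cases hℓ : W ℓ = 0
    · rw [hℓ, zero_smul]
      exact (Finset.sum_eq_zero fun i hi => by rw [hzero ℓ hℓ i hi, zero_smul]).symm
    · rw [hzite ℓ, dif_neg hℓ, Finset.smul_sum]
      refine Finset.sum_congr rfl fun i hi => ?_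
      rw [smul_smul, mul_inv_cancel_left₀ hℓ]
  have hsingle : ∑ i, t i • vert i = t := by
    have : ∀ i, t i • vert i = Pi.single i (t i) := by
      intro i
      funext j
      rw [hvertdef]
      simp [Pi.single_apply, mul_ite]
    rw [Finset.sum_congr rfl fun i _ => this i]
    exact Finset.univ_sum_single t
  have hzpt : ∑ ℓ, W ℓ • z ℓ = t := by
    rw [Finset.sum_congr rfl fun ℓ _ => hWz ℓ]
    rw [Finset.sum_fiberwise_of_maps_to hmaps (fun i => t i • vert i)]
    exact hsingle
  -- h on the z points
  have hz_h : ∀ ℓ : Fin P, W ℓ ≠ 0 → h (z ℓ) ≤ (if (ℓ : ℕ) < c₁ then (0:ℝ) else 1) := by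
    intro ℓ hℓ
    by_cases hcase : (ℓ : ℕ) < c₁
    · rw [if_pos hcase]
      have hcard : (fib ℓ).card ≤ B ^ 0 := by
        rw [pow_zero]; exact hfibC ℓ hcase
      have := depth_bound_finset (by omega : 1 ≤ B) (convex_stdSimplex ℝ (Fin (n+1))) hg 0
        (fib ℓ) hcard vert (fun i => (W ℓ)⁻¹ * t i) (fun i _ => hvmem i)
        (fun i _ => mul_nonneg (inv_nonneg.mpr (hWnn ℓ)) (ht0 i)) (hinvsum ℓ hℓ)
      rw [hzite ℓ, dif_neg hℓ]
      calc h (∑ i ∈ fib ℓ, ((W ℓ)⁻¹ * t i) • vert i)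
          ≤ (∑ i ∈ fib ℓ, ((W ℓ)⁻¹ * t i) * h (vert i)) + (0:ℕ) := this
        _ = 0 := by
            rw [Finset.sum_eq_zero fun i _ => by rw [hvertdef, hvert i, mul_zero]]
            simp
    · rw [if_neg hcase]
      have hcard : (fib ℓ).card ≤ B ^ 1 := by
        rw [pow_one]; exact hfibB ℓ (by omega)
      have := depth_bound_finset (by omega : 1 ≤ B) (convex_stdSimplex ℝ (Fin (n+1))) hg 1
        (fib ℓ) hcard vert (fun i => (W ℓ)⁻¹ * t i) (fun i _ => hvmem i)
        (fun i _ => mul_nonneg (inv_nonneg.mpr (hWnn ℓ)) (ht0 i)) (hinvsum ℓ hℓ)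
      rw [hzite ℓ, dif_neg hℓ]
      calc h (∑ i ∈ fib ℓ, ((W ℓ)⁻¹ * t i) • vert i)
          ≤ (∑ i ∈ fib ℓ, ((W ℓ)⁻¹ * t i) * h (vert i)) + (1:ℕ) := this
        _ = 1 := by
            rw [Finset.sum_eq_zero fun i _ => by rw [hvertdef, hvert i, mul_zero]]
            simp
  -- main application at depth k
  have hcard_univ : (univ : Finset (Fin P)).card ≤ B ^ k := by
    rw [Finset.card_univ, Fintype.card_fin]
  have hmain := depth_bound_finset (by omega : 1 ≤ B) (convex_stdSimplex ℝ (Fin (n+1))) hg k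
    (univ : Finset (Fin P)) hcard_univ z W (fun ℓ _ => hzmem ℓ) (fun ℓ _ => hWnn ℓ) hW1
  rw [hzpt] at hmain
  -- bound the middle sum
  have hmid : ∑ ℓ, W ℓ * h (z ℓ) ≤ ∑ i ∈ S, t i := by
    have step1 : ∑ ℓ : Fin P, W ℓ * h (z ℓ) ≤ ∑ ℓ : Fin P, (if (ℓ : ℕ) < c₁ then (0:ℝ) else W ℓ) := by
      refine Finset.sum_le_sum fun ℓ _ => ?_
      by_cases hℓ : W ℓ = 0
      · rw [hℓ, zero_mul]
        split <;> simp [hℓ]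
      · have := hz_h ℓ hℓ
        by_cases hcase : (ℓ : ℕ) < c₁
        · rw [if_pos hcase] at this ⊢
          have := mul_le_mul_of_nonneg_left this (hWnn ℓ)
          simpa using this
        · rw [if_neg hcase] at this ⊢
          have := mul_le_mul_of_nonneg_left this (hWnn ℓ)
          simpa using this
    have step2 : ∑ ℓ : Fin P, (if (ℓ : ℕ) < c₁ then (0:ℝ) else W ℓ)
        = ∑ i, (if (φn i) < c₁ then (0:ℝ) else t i) := by
      rw [← Finset.sum_fiberwise_of_maps_to hmaps (fun i => if (φn i) < c₁ then (0:ℝ) else t i)]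
      refine Finset.sum_congr rfl fun ℓ _ => ?_
      by_cases hcase : (ℓ : ℕ) < c₁
      · rw [if_pos hcase]
        refine (Finset.sum_eq_zero fun i hi => ?_).symm
        rw [hfib_mem] at hi
        rw [if_pos (by omega)]
      · rw [if_neg hcase, hW]
        refine (Finset.sum_congr rfl fun i hi => ?_).symm
        rw [hfib_mem] at hi
        rw [if_neg (by omega)]
    have step3 : ∑ i, (if (φn i) < c₁ then (0:ℝ) else t i) ≤ ∑ i ∈ S, t i := by
      have hvanish : ∀ i ∈ (univ : Finset (Fin (n+1))), i ∉ S → (if (φn i) < c₁ then (0:ℝ) else t i) = 0 := by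
        intro i _ hi
        rw [if_pos (hφnC_lt i hi)]
      rw [← Finset.sum_subset (Finset.subset_univ S) hvanish]
      refine Finset.sum_le_sum fun i _ => ?_
      split
      · exact ht0 i
      · exact le_refl _
    linarith
  have hfinal : h t ≤ (∑ i ∈ S, t i) + k := by linarith
  have hcast : ((n + 1 - B ^ Nat.log B n) + ((n + 1 - B ^ Nat.log B n) + B - 2) / (B - 1)) = m := rfl
  rw [kappa_formula n B hn hB, hcast, ← hk]
  have hmsum : ∑ i ∈ S, t i ≤ (m : ℝ) / ((n : ℝ) + 1) := by
    have h2 : ((n + 1 : ℕ) : ℝ) = (n : ℝ) + 1 := by push_cast; ring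
    rw [← h2]
    exact hSsum
  linarith

theorem stmt19 (n B : ℕ) (hn : 1 ≤ n) (hB : 2 ≤ B)
    (U : Set (Fin n → ℝ)) (hU : Convex ℝ U)
    (x : Fin (n + 1) → (Fin n → ℝ)) (hx : ∀ j, x j ∈ U)
    (f : (Fin n → ℝ) → ℝ) (hf : ApproxConvexWrt B U f 1)
    (h : (Fin (n + 1) → ℝ) → ℝ)
    (hh : ∀ t : Fin (n + 1) → ℝ,
      h t = f (∑ j, t j • x j) - ∑ j, t j * f (x j)) :
    ApproxConvexWrt B (stdSimplex ℝ (Fin (n + 1))) h 1 ∧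
    (∀ j : Fin (n + 1), h (Pi.single j 1) = 0) ∧
    ∀ t ∈ stdSimplex ℝ (Fin (n + 1)), h t ≤ kappa n B := by
  have hg := h_approx n B U hU x hx f hf h hh
  have hv := h_vertex n B x f h hh
  exact ⟨hg, hv, part3 n B hn hB h hg hv⟩
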